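/- arXiv:1206.2820 — 9 statements merged into one kernel-verified Lean document; each statement's English description precedes it below -/
import Mathlib

section
/- Let X be a set and f : X → X a function with f(x) ≠ x for all x ∈ X. Then there exists a finite cover 𝓕 of X (by arbitrary subsets) such that for every F ∈ 𝓕, the image f(F) is disjoint from F. In fact, three sets suffice. -/
open SimpleGraph

private lemma fin3_exists_ne : ∀ x y : Fin 3, ∃ k : Fin 3, k ≠ x ∧ k ≠ y := by decide

private lemma finColor {X : Type*} (f : X → X) (hf : ∀ x, f x ≠ x) (A : Finset X) :
    ∃ c : X → Fin 3, ∀ a ∈ A, ∀ b ∈ A, f a = b → c a ≠ c b := by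
  classical
  induction A using Finset.strongInduction with
  | _ A IH =>
    rcases A.eq_empty_or_nonempty with rfl | ⟨v0, hv0⟩
    · exact ⟨fun _ => 0, by simp⟩
    by_cases hsurj : ∀ v ∈ A, ∃ a ∈ A, f a = v
    · -- f restricted to A is a bijection of A
      have himg : A ⊆ A.image f := by
        intro v hv
        obtain ⟨a, ha, hfa⟩ := hsurj v hv
        exact Finset.mem_image.2 ⟨a, ha, hfa⟩
      have hcard : (A.image f).card = A.card :=
        le_antisymm (Finset.card_image_le) (Finset.card_le_card himg)
      have hinj : Set.InjOn f A := Finset.injOn_of_card_image_eq hcard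
      have himg' : A.image f = A :=
        Finset.eq_of_subset_of_card_le (Finset.eq_of_subset_of_card_le himg (by omega)).ge
          (by omega)
      have hmaps : ∀ a ∈ A, f a ∈ A := by
        intro a ha
        rw [← himg']
        exact Finset.mem_image_of_mem f ha
      -- unique preimage u of v0
      obtain ⟨u, hu, hfu⟩ := hsurj v0 hv0
      obtain ⟨c, hc⟩ := IH (A.erase v0) (Finset.erase_ssubset hv0)
      obtain ⟨k, hk1, hk2⟩ := fin3_exists_ne (c (f v0)) (c u)
      refine ⟨Function.update c v0 k, ?_⟩
      intro a ha b hb hab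
      by_cases hav : a = v0
      · have hbv : b ≠ v0 := by
          rw [← hab, hav]; exact hf v0
        rw [hav, Function.update_self, Function.update_of_ne hbv, ← hab, hav]
        exact hk1
      · rw [Function.update_of_ne hav]
        by_cases hbv : b = v0
        · have hau : a = u := hinj ha hu (by rw [hab, hbv, hfu])
          rw [hbv, Function.update_self, hau]
          exact fun h => hk2 h.symm
        · rw [Function.update_of_ne hbv]
          exact hc a (Finset.mem_erase.2 ⟨hav, ha⟩) b (Finset.mem_erase.2 ⟨hbv, hb⟩) hab
    · push_neg at hsurj
      obtain ⟨v, hv, hnopre⟩ := hsurj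
      obtain ⟨c, hc⟩ := IH (A.erase v) (Finset.erase_ssubset hv)
      obtain ⟨k, hk1, -⟩ := fin3_exists_ne (c (f v)) (c (f v))
      refine ⟨Function.update c v k, ?_⟩
      intro a ha b hb hab
      have hbv : b ≠ v := fun h => hnopre a ha (h ▸ hab)
      by_cases hav : a = v
      · rw [hav, Function.update_self, Function.update_of_ne hbv, ← hab, hav]
        exact hk1
      ·
        rw [Function.update_of_ne hav, Function.update_of_ne hbv]
        exact hc a (Finset.mem_erase.2 ⟨hav, ha⟩) b (Finset.mem_erase.2 ⟨hbv, hb⟩) hab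

theorem stmt0 {X : Type*} (f : X → X) (hf : ∀ x, f x ≠ x) :
    ∃ F : Fin 3 → Set X, (⋃ i, F i) = Set.univ ∧ ∀ i, Disjoint (f '' F i) (F i) := by
  classical
  set G : SimpleGraph X := SimpleGraph.fromRel (fun x y => f x = y) with hG
  have hhom : Nonempty (G →g (⊤ : SimpleGraph (Fin 3))) := by
    apply nonempty_hom_of_forall_finite_subgraph_hom
    intro G' hfin
    have hex := finColor f hf hfin.toFinset
    set c := hex.choose with hcdef
    have hc := hex.choose_spec
    refine ⟨fun v => c v.1, ?_⟩
    rintro ⟨a, ha⟩ ⟨b, hb⟩ hadj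
    have hGadj : G.Adj a b := G'.adj_sub hadj
    rw [hG, SimpleGraph.fromRel_adj] at hGadj
    obtain ⟨hne, h | h⟩ := hGadj
    · exact hc a (hfin.mem_toFinset.2 ha) b (hfin.mem_toFinset.2 hb) h
    · exact (hc b (hfin.mem_toFinset.2 hb) a (hfin.mem_toFinset.2 ha) h).symm
  obtain ⟨φ⟩ := hhom
  refine ⟨fun i => {x | φ x = i}, ?_, ?_⟩
  · ext x; simp
  · intro i
    rw [Set.disjoint_left]
    rintro y ⟨x, hx, rfl⟩ hy
    have hadj : G.Adj x (f x) := by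
      rw [hG, SimpleGraph.fromRel_adj]
      exact ⟨(hf x).symm, Or.inl rfl⟩
    have := φ.map_adj hadj
    simp only [SimpleGraph.top_adj] at this
    exact this (hx.trans hy.symm)
end

section
/- Let X be a set, k a natural number, and f : X → Set X a function such that x ∉ f(x) and |f(x)| ≤ k for all x ∈ X. Then there exists a finite cover 𝓕 of X such that for every F ∈ 𝓕, the set F is disjoint from ⋃ { f(x) : x ∈ F }. -/
/-!
Join `x` and `y` whenever `y ∈ f x` or `x ∈ f y`. Each vertex has at most `k` out-neighbours, so
every finite set of vertices spans at most `k` edges per vertex and hence contains a vertex with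
at most `2k` neighbours in it. Removing such vertices one at a time colours every finite set
greedily with `2k + 1` colours, and the de Bruijn–Erdős compactness theorem colours the whole
graph. Since `x ∉ f x`, each colour class is a colour of `f`.
-/

open Finset

namespace SimpleGraph

variable {V : Type*} {G : SimpleGraph V} {n : ℕ}

theorem colorable_of_forall_finset_exists_coloring
    (h : ∀ s : Finset V, ∃ c : V → Fin n, ∀ x ∈ s, ∀ y ∈ s, G.Adj x y → c x ≠ c y) :
    G.Colorable n := by
  classical
  refine nonempty_hom_of_forall_finite_subgraph_hom fun G' hG' => ?_
  have hc := (h hG'.toFinset).choose_spec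
  exact ⟨fun v => (h hG'.toFinset).choose v, fun {a b} hab =>
    hc a (by simp) b (by simp) (G'.adj_sub hab)⟩

theorem exists_coloring_of_forall_exists_degree_lt [DecidableRel G.Adj]
    (hdeg : ∀ s : Finset V, s.Nonempty → ∃ x ∈ s, #{y ∈ s | G.Adj x y} < n) (s : Finset V) :
    ∃ c : V → Fin n, ∀ x ∈ s, ∀ y ∈ s, G.Adj x y → c x ≠ c y := by
  classical
  induction s using Finset.strongInduction with
  | _ s ih =>
    rcases s.eq_empty_or_nonempty with rfl | hs
    -- `Fin n` may be empty: `hdeg` rules out `n = 0` only when `V` is nonempty.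
    · obtain ⟨c⟩ : Nonempty (V → Fin n) := by
        rcases isEmpty_or_nonempty V with _ | ⟨⟨v⟩⟩
        · infer_instance
        · obtain ⟨_, -, hv⟩ := hdeg _ (singleton_nonempty v)
          exact ⟨fun _ => ⟨0, Nat.zero_lt_of_lt hv⟩⟩
      exact ⟨c, by simp⟩
    obtain ⟨x, hxs, hx⟩ := hdeg s hs
    obtain ⟨c, hc⟩ := ih (s.erase x) (erase_ssubset hxs)
    obtain ⟨i, -, hi⟩ : ∃ i ∈ univ, i ∉ image c {y ∈ s | G.Adj x y} :=
      exists_mem_notMem_of_card_lt_card <| by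
        simpa using card_image_le.trans_lt hx
    have hfree : ∀ y ∈ s, G.Adj x y → i ≠ c y := fun y hy hxy h =>
      hi (mem_image.2 ⟨y, mem_filter.2 ⟨hy, hxy⟩, h.symm⟩)
    refine ⟨Function.update c x i, fun a ha b hb hab => ?_⟩
    rcases eq_or_ne a x with rfl | hax
    · simpa [Function.update_of_ne hab.ne'] using hfree b hb hab
    rcases eq_or_ne b x with rfl | hbx
    · simpa [Function.update_of_ne hax] using (hfree a ha hab.symm).symm
    simpa [Function.update_of_ne hax, Function.update_of_ne hbx] using
      hc a (mem_erase.2 ⟨hax, ha⟩) b (mem_erase.2 ⟨hbx, hb⟩) hab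

theorem colorable_of_forall_exists_degree_lt [DecidableRel G.Adj]
    (hdeg : ∀ s : Finset V, s.Nonempty → ∃ x ∈ s, #{y ∈ s | G.Adj x y} < n) :
    G.Colorable n :=
  colorable_of_forall_finset_exists_coloring (exists_coloring_of_forall_exists_degree_lt hdeg)

end SimpleGraph

section BoundedOutDegree

variable {X : Type*} {k : ℕ} {f : X → Set X}

theorem card_filter_mem_le_ncard {t : Set X} [DecidablePred (· ∈ t)] (ht : t.Finite)
    (s : Finset X) : #{y ∈ s | y ∈ t} ≤ t.ncard := by
  rw [← Set.ncard_coe_finset]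
  exact Set.ncard_le_ncard (fun y hy => (mem_filter.1 hy).2) ht

theorem sum_card_filter_fromRel_adj_le [DecidableEq X] [DecidableRel (· ∈ f ·)]
    (hf : ∀ x, (f x).Finite ∧ (f x).ncard ≤ k) (s : Finset X) :
    ∑ x ∈ s, #{y ∈ s | (SimpleGraph.fromRel fun x y => y ∈ f x).Adj x y} ≤ ∑ _x ∈ s, 2 * k := by
  let r : X → X → Prop := fun x y => y ∈ f x
  calc ∑ x ∈ s, #{y ∈ s | (SimpleGraph.fromRel r).Adj x y}
      ≤ ∑ x ∈ s, (#(s.bipartiteAbove r x) + #(s.bipartiteBelow r x)) := by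
        refine sum_le_sum fun x _ => (card_le_card fun y hy => ?_).trans (card_union_le _ _)
        simp only [mem_filter, SimpleGraph.fromRel_adj] at hy
        simpa [bipartiteAbove, bipartiteBelow, hy.1] using hy.2.2
    _ = ∑ x ∈ s, #(s.bipartiteAbove r x) + ∑ x ∈ s, #(s.bipartiteAbove r x) := by
        rw [sum_add_distrib, sum_card_bipartiteAbove_eq_sum_card_bipartiteBelow]
    _ ≤ ∑ _x ∈ s, k + ∑ _x ∈ s, k := by
        gcongr with x <;> exact (card_filter_mem_le_ncard (hf x).1 s).trans (hf x).2
    _ = ∑ _x ∈ s, 2 * k := by simp only [sum_const]; ring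

theorem colorable_fromRel_of_ncard_le (hf : ∀ x, (f x).Finite ∧ (f x).ncard ≤ k) :
    (SimpleGraph.fromRel fun x y => y ∈ f x).Colorable (2 * k + 1) := by
  classical
  refine SimpleGraph.colorable_of_forall_exists_degree_lt fun s hs => ?_
  obtain ⟨x, hxs, hx⟩ := exists_le_of_sum_le hs (sum_card_filter_fromRel_adj_le hf s)
  exact ⟨x, hxs, Nat.lt_succ_of_le hx⟩

end BoundedOutDegree

theorem stmt1 {X : Type*} (k : ℕ) (f : X → Set X)
    (h1 : ∀ x, x ∉ f x) (h2 : ∀ x, (f x).Finite ∧ (f x).ncard ≤ k) :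
    ∃ 𝓕 : Finset (Set X), (∀ x : X, ∃ F ∈ 𝓕, x ∈ F) ∧
      ∀ F ∈ 𝓕, Disjoint F (⋃ x ∈ F, f x) := by
  classical
  obtain ⟨C⟩ := colorable_fromRel_of_ncard_le h2
  refine ⟨univ.image C.colorClass, fun x => ⟨_, mem_image_of_mem _ (mem_univ (C x)),
    C.mem_colorClass x⟩, ?_⟩
  simp only [mem_image, mem_univ, true_and, forall_exists_index, forall_apply_eq_imp_iff]
  intro i
  refine Set.disjoint_left.2 fun y hy hyf => ?_
  obtain ⟨x, hx, hyx⟩ := Set.mem_iUnion₂.1 hyf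
  exact C.not_adj_of_mem_colorClass hx hy
    ((SimpleGraph.fromRel_adj _ x y).2 ⟨fun h => h1 x (h ▸ hyx), Or.inl hyx⟩)
end

section
/- Define f : {n : ℕ // n ≥ 1} → Finset ℕ by f(n) = {n+1, n+2, ..., 2n}. Then f is not colorable: there is no finite cover 𝓕 of {n : n ≥ 1} such that every F ∈ 𝓕 is disjoint from ⋃ { (f(n) : Set ℕ) : n ∈ F }. -/
theorem stmt2 (f : {n : ℕ // n ≥ 1} → Finset ℕ)
    (hf : ∀ n, f n = Finset.Ioc n.1 (2 * n.1)) :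
    ¬ ∃ 𝓕 : Finset (Set {n : ℕ // n ≥ 1}),
        (∀ x : {n : ℕ // n ≥ 1}, ∃ F ∈ 𝓕, x ∈ F) ∧
        ∀ F ∈ 𝓕, Disjoint (Subtype.val '' F) (⋃ x ∈ F, (f x : Set ℕ)) := by
  rintro ⟨𝓕, hcov, hdisj⟩
  set k := 𝓕.card with hk
  have hpt : ∀ i : Fin (k + 1), ∃ F ∈ 𝓕,
      (⟨k + 1 + i.1, by omega⟩ : {n : ℕ // n ≥ 1}) ∈ F := fun i => hcov _
  choose F hF hmem using hpt
  have hcard : 𝓕.card < (Finset.univ : Finset (Fin (k + 1))).card := by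
    simp [hk]
  obtain ⟨i, -, j, -, hne, heq⟩ :=
    Finset.exists_ne_map_eq_of_card_lt_of_maps_to hcard (fun i _ => hF i)
  -- WLOG i < j
  have key : ∀ i j : Fin (k + 1), i < j → F i = F j → False := by
    intro i j hij heq
    have hd := hdisj (F i) (hF i)
    have h1 : (k + 1 + j.1 : ℕ) ∈ Subtype.val '' F i := by
      rw [heq]
      exact ⟨_, hmem j, rfl⟩
    have h2 : (k + 1 + j.1 : ℕ) ∈ ⋃ x ∈ F i, (f x : Set ℕ) := by
      refine Set.mem_biUnion (hmem i) ?_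
      have hj : j.1 ≤ k := by omega
      simp only [hf, Finset.coe_Ioc, Set.mem_Ioc]
      refine ⟨?_, by omega⟩
      have : i.1 < j.1 := hij
      omega
    exact hd.ne_of_mem h1 h2 rfl
  rcases hne.lt_or_gt with h | h
  · exact key i j h heq
  · exact key j i h heq.symm
end

section
/- Let Z be a normal topological space, X a closed subspace of Z, and f : X → 2^Z a continuous map into the hyperspace of nonempty closed subsets of Z with the Vietoris topology. If F ⊆ X is a bright color of f (i.e., F is closed in X and F is disjoint from the closure in Z of ⋃_{x ∈ F} f(x)), then there exists an open neighborhood U of F in X such that the closure of U in X is also a bright color of f. -/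
open Set

/-- The Vietoris topology on the powerset of `Z`, generated by the sets
`{A | A ⊆ U}` and `{A | A ∩ U ≠ ∅}` for `U` open.  Its restriction to the
nonempty closed subsets of `Z` is the usual Vietoris topology on `2^Z`. -/
def vietoris (Z : Type*) [TopologicalSpace Z] : TopologicalSpace (Set Z) :=
  TopologicalSpace.generateFrom
    ({S | ∃ U : Set Z, IsOpen U ∧ S = {A : Set Z | A ⊆ U}} ∪
     {S | ∃ U : Set Z, IsOpen U ∧ S = {A : Set Z | (A ∩ U).Nonempty}})

/-- Continuity of a set-valued map with respect to the Vietoris topology. -/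
def VCont {X Z : Type*} [tX : TopologicalSpace X] [TopologicalSpace Z] (f : X → Set Z) : Prop :=
  @Continuous X (Set Z) tX (vietoris Z) f

theorem stmt3 {Z : Type*} [TopologicalSpace Z] [NormalSpace Z]
    (X : Set Z) (hX : IsClosed X) (f : X → Set Z)
    (hfv : ∀ x, (f x).Nonempty ∧ IsClosed (f x))
    (hcont : VCont f)
    (F : Set X) (hF : IsClosed F)
    (hbright : Disjoint (Subtype.val '' F) (closure (⋃ x ∈ F, f x))) :
    ∃ U : Set X, IsOpen U ∧ F ⊆ U ∧
      Disjoint (Subtype.val '' closure U) (closure (⋃ x ∈ closure U, f x)) := by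
  set F' : Set Z := Subtype.val '' F with hF'def
  have hF'c : IsClosed F' := hX.isClosedEmbedding_subtypeVal.isClosedMap _ hF
  set K := closure (⋃ x ∈ F, f x) with hKdef
  have hKc : IsClosed K := isClosed_closure
  -- first separation: K from F'
  obtain ⟨W₁, V₀, hW₁, hV₀, hKW₁, hFV₀, hd₀⟩ := NormalSpace.normal K F' hKc hF'c hbright.symm
  have hclW₁F' : Disjoint (closure W₁) F' := by
    have h1 : closure W₁ ⊆ V₀ᶜ :=
      closure_minimal hd₀.subset_compl_right hV₀.isClosed_compl
    exact disjoint_compl_left.mono h1 hFV₀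
  -- second separation: closure W₁ from F'
  obtain ⟨W₂, V, hW₂, hV, hW₁W₂, hFV, hd₁⟩ :=
    NormalSpace.normal (closure W₁) F' isClosed_closure hF'c hclW₁F'
  have hclVclW₁ : Disjoint (closure V) (closure W₁) := by
    have hV' : closure V ⊆ W₂ᶜ :=
      closure_minimal hd₁.symm.subset_compl_right hW₂.isClosed_compl
    exact disjoint_compl_left.mono hV' hW₁W₂
  -- the open set
  set U : Set X := (Subtype.val ⁻¹' V) ∩ f ⁻¹' {A | A ⊆ W₁} with hUdef
  refine ⟨U, ?_, ?_, ?_⟩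
  · refine IsOpen.inter (hV.preimage continuous_subtype_val) ?_
    exact @Continuous.isOpen_preimage _ _ _ (vietoris Z) f hcont _
      (TopologicalSpace.isOpen_generateFrom_of_mem (Or.inl ⟨W₁, hW₁, rfl⟩))
  · intro x hx
    exact ⟨hFV ⟨x, hx, rfl⟩, fun z hz => hKW₁ (subset_closure (mem_biUnion hx hz))⟩
  · have hUcl1 : closure U ⊆ Subtype.val ⁻¹' closure V :=
      closure_minimal (fun x hx => subset_closure hx.1)
        (isClosed_closure.preimage continuous_subtype_val)
    have hclosed : IsClosed (f ⁻¹' {A | A ⊆ closure W₁}) := by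
      rw [← isOpen_compl_iff]
      have heq : (f ⁻¹' {A | A ⊆ closure W₁})ᶜ
          = f ⁻¹' {A | (A ∩ (closure W₁)ᶜ).Nonempty} := by
        ext x
        simp [inter_compl_nonempty_iff]
      rw [heq]
      exact @Continuous.isOpen_preimage _ _ _ (vietoris Z) f hcont _
        (TopologicalSpace.isOpen_generateFrom_of_mem
          (Or.inr ⟨(closure W₁)ᶜ, isClosed_closure.isOpen_compl, rfl⟩))
    have hUcl2 : closure U ⊆ f ⁻¹' {A | A ⊆ closure W₁} :=
      closure_minimal (fun x hx => hx.2.trans subset_closure) hclosed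
    refine hclVclW₁.mono ?_ ?_
    · rintro _ ⟨x, hx, rfl⟩
      exact hUcl1 hx
    · exact closure_minimal (iUnion₂_subset fun x hx => hUcl2 hx) isClosed_closure
end

section
/- Let Z be a topological space, X ⊆ Z, and let f, g, h : X → 2^Z be maps into the nonempty closed subsets of Z with f(x) ⊆ g(x) ∪ h(x) for every x ∈ X. If g is colorable by at most N_g colors and h is colorable by at most N_h colors, then f is colorable by at most N_g · N_h colors. -/
open Set

theorem stmt4 {Z : Type*} [TopologicalSpace Z] (X : Set Z)
    (f g h : X → Set Z)
    (hfv : ∀ x, (f x).Nonempty ∧ IsClosed (f x))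
    (hgv : ∀ x, (g x).Nonempty ∧ IsClosed (g x))
    (hhv : ∀ x, (h x).Nonempty ∧ IsClosed (h x))
    (Ng Nh : ℕ)
    (hfgh : ∀ x, f x ⊆ g x ∪ h x)
    (hg : ∃ 𝓖 : Finset (Set X), 𝓖.card ≤ Ng ∧ (∀ x : X, ∃ G ∈ 𝓖, x ∈ G) ∧
      ∀ G ∈ 𝓖, IsClosed G ∧ Disjoint (Subtype.val '' G) (⋃ x ∈ G, g x))
    (hh : ∃ 𝓗 : Finset (Set X), 𝓗.card ≤ Nh ∧ (∀ x : X, ∃ H ∈ 𝓗, x ∈ H) ∧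
      ∀ H ∈ 𝓗, IsClosed H ∧ Disjoint (Subtype.val '' H) (⋃ x ∈ H, h x)) :
    ∃ 𝓕 : Finset (Set X), 𝓕.card ≤ Ng * Nh ∧ (∀ x : X, ∃ F ∈ 𝓕, x ∈ F) ∧
      ∀ F ∈ 𝓕, IsClosed F ∧ Disjoint (Subtype.val '' F) (⋃ x ∈ F, f x) := by
  classical
  obtain ⟨𝓖, hGcard, hGcov, hGcol⟩ := hg
  obtain ⟨𝓗, hHcard, hHcov, hHcol⟩ := hh
  refine ⟨(𝓖 ×ˢ 𝓗).image (fun p => p.1 ∩ p.2), ?_, ?_, ?_⟩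
  · calc ((𝓖 ×ˢ 𝓗).image (fun p => p.1 ∩ p.2)).card ≤ (𝓖 ×ˢ 𝓗).card :=
        Finset.card_image_le
      _ = 𝓖.card * 𝓗.card := Finset.card_product _ _
      _ ≤ Ng * Nh := Nat.mul_le_mul hGcard hHcard
  · intro x
    obtain ⟨G, hG, hxG⟩ := hGcov x
    obtain ⟨H, hH, hxH⟩ := hHcov x
    exact ⟨G ∩ H, Finset.mem_image.2 ⟨(G, H), Finset.mem_product.2 ⟨hG, hH⟩, rfl⟩,
      hxG, hxH⟩
  · intro F hF
    obtain ⟨⟨G, H⟩, hp, rfl⟩ := Finset.mem_image.1 hF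
    obtain ⟨hG, hH⟩ := Finset.mem_product.1 hp
    obtain ⟨hGc, hGd⟩ := hGcol G hG
    obtain ⟨hHc, hHd⟩ := hHcol H hH
    refine ⟨hGc.inter hHc, ?_⟩
    rw [Set.disjoint_left]
    rintro z ⟨x, ⟨hxG, hxH⟩, rfl⟩ hz
    simp only [mem_iUnion] at hz
    obtain ⟨y, hy, hzy⟩ := hz
    rcases hfgh y hzy with hzg | hzh
    · exact Set.disjoint_left.1 hGd ⟨x, hxG, rfl⟩
        (mem_iUnion.2 ⟨y, mem_iUnion.2 ⟨hy.1, hzg⟩⟩)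
    · exact Set.disjoint_left.1 hHd ⟨x, hxH, rfl⟩
        (mem_iUnion.2 ⟨y, mem_iUnion.2 ⟨hy.2, hzh⟩⟩)
end

section
/- Let n > 1, let A be closed in ℝ^m, and let f : A → exp_n(ℝ^m) \ exp_{n-1}(ℝ^m) be a continuous map (so |f(x)| = n for all x). Suppose that for all x ∈ A, the set of points of f(x) attaining the maximum first coordinate has fixed cardinality M with 1 ≤ M < n. Define g(x) = { z ∈ f(x) : π₁(z) = max π₁(f(x)) } and h(x) = f(x) \ g(x). Then g and h are continuous maps from A into exp_{n-1}(ℝ^m) (with the Vietoris topology). -/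
open Set

/-- `f` is colorable by at most `N` bright colors: there is a cover of `X` by at most `N`
closed sets `F`, each disjoint from the closure in `Z` of `⋃ x ∈ F, f x`. -/
def BrightColorable {Z : Type*} [TopologicalSpace Z] {X : Set Z}
    (f : X → Set Z) (N : ℕ) : Prop :=
  ∃ 𝓕 : Finset (Set X), 𝓕.card ≤ N ∧ (∀ x : X, ∃ F ∈ 𝓕, x ∈ F) ∧
    ∀ F ∈ 𝓕, IsClosed F ∧ Disjoint (Subtype.val '' F) (closure (⋃ x ∈ F, f x))

lemma vcont_open_sub {X Z : Type*} [TopologicalSpace X] [TopologicalSpace Z]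
    {f : X → Set Z} (hf : VCont f) {U : Set Z} (hU : IsOpen U) :
    IsOpen {x | f x ⊆ U} := by
  have h : @IsOpen (Set Z) (vietoris Z) {A : Set Z | A ⊆ U} :=
    TopologicalSpace.isOpen_generateFrom_of_mem (Or.inl ⟨U, hU, rfl⟩)
  exact continuous_def.mp hf _ h

lemma vcont_open_inter {X Z : Type*} [TopologicalSpace X] [TopologicalSpace Z]
    {f : X → Set Z} (hf : VCont f) {U : Set Z} (hU : IsOpen U) :
    IsOpen {x | (f x ∩ U).Nonempty} := by
  have h : @IsOpen (Set Z) (vietoris Z) {A : Set Z | (A ∩ U).Nonempty} :=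
    TopologicalSpace.isOpen_generateFrom_of_mem (Or.inr ⟨U, hU, rfl⟩)
  exact continuous_def.mp hf _ h

lemma vcont_of {X Z : Type*} [TopologicalSpace X] [TopologicalSpace Z] {f : X → Set Z}
    (h1 : ∀ U : Set Z, IsOpen U → IsOpen {x | f x ⊆ U})
    (h2 : ∀ U : Set Z, IsOpen U → IsOpen {x | (f x ∩ U).Nonempty}) : VCont f := by
  rw [VCont, vietoris, continuous_generateFrom_iff]
  rintro s (⟨U, hU, rfl⟩ | ⟨U, hU, rfl⟩)
  · exact h1 U hU
  · exact h2 U hU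

lemma exists_sep {Z : Type*} [MetricSpace Z] {S : Set Z} (hfin : S.Finite) :
    ∃ ε : ℝ, 0 < ε ∧ ∀ p ∈ S, ∀ q ∈ S, p ≠ q → 2 * ε ≤ dist p q := by
  set D : Set ℝ := {d | ∃ p ∈ S, ∃ q ∈ S, p ≠ q ∧ d = dist p q} with hD
  have hDfin : D.Finite := by
    apply ((hfin.prod hfin).image (fun pq : Z × Z => dist pq.1 pq.2)).subset
    rintro d ⟨p, hp, q, hq, _, rfl⟩
    exact ⟨(p, q), ⟨hp, hq⟩, rfl⟩
  rcases D.eq_empty_or_nonempty with hDe | hDne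
  · refine ⟨1, one_pos, fun p hp q hq hpq => ?_⟩
    exact absurd (show dist p q ∈ D from ⟨p, hp, q, hq, hpq, rfl⟩) (hDe ▸ notMem_empty _)
  · have hmem : sInf D ∈ D := hDne.csInf_mem hDfin
    obtain ⟨p, hp, q, hq, hpq, hd⟩ := hmem
    have hpos : 0 < sInf D := hd ▸ dist_pos.mpr hpq
    refine ⟨sInf D / 2, by linarith, fun p hp q hq hpq => ?_⟩
    have : sInf D ≤ dist p q := csInf_le hDfin.bddBelow ⟨p, hp, q, hq, hpq, rfl⟩
    linarith

lemma local_struct {X Z : Type*} [TopologicalSpace X] [MetricSpace Z] {n : ℕ}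
    {f : X → Set Z} (hn : 0 < n)
    (hcard : ∀ x, (f x).Finite ∧ (f x).ncard = n)
    (hcont : VCont f) (x₀ : X) :
    ∃ W : Set X, IsOpen W ∧ x₀ ∈ W ∧
      ∃ σ : Z → X → Z,
        (∀ p ∈ f x₀, σ p x₀ = p) ∧
        (∀ p ∈ f x₀, ContinuousOn (σ p) W) ∧
        (∀ x ∈ W, ∀ p ∈ f x₀, σ p x ∈ f x) ∧
        (∀ x ∈ W, Set.InjOn (fun p => σ p x) (f x₀)) ∧
        (∀ x ∈ W, ∀ y ∈ f x, ∃ p ∈ f x₀, y = σ p x) := by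
  classical
  obtain ⟨hfin, hncard⟩ := hcard x₀
  obtain ⟨ε, hε, hsep⟩ := exists_sep hfin
  have hballs : ∀ p ∈ f x₀, ∀ q ∈ f x₀, p ≠ q →
      Disjoint (Metric.ball p ε) (Metric.ball q ε) := by
    intro p hp q hq hpq
    exact Metric.ball_disjoint_ball (by have := hsep p hp q hq hpq; linarith)
  set U0 : Set Z := ⋃ p ∈ f x₀, Metric.ball p ε with hU0def
  have hU0 : IsOpen U0 := isOpen_biUnion fun p _ => Metric.isOpen_ball
  set W : Set X := {x | f x ⊆ U0} ∩ ⋂ p ∈ f x₀, {x | (f x ∩ Metric.ball p ε).Nonempty}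
    with hWdef
  have hWo : IsOpen W := by
    refine (vcont_open_sub hcont hU0).inter (hfin.isOpen_biInter fun p _ => ?_)
    exact vcont_open_inter hcont Metric.isOpen_ball
  have hx₀W : x₀ ∈ W := by
    constructor
    · intro y hy
      exact mem_biUnion hy (Metric.mem_ball_self hε)
    · exact mem_biInter fun p hp => ⟨p, hp, Metric.mem_ball_self hε⟩
  have hWsub : ∀ x ∈ W, f x ⊆ U0 := fun x hx => hx.1
  have hWne : ∀ x ∈ W, ∀ p ∈ f x₀, (f x ∩ Metric.ball p ε).Nonempty := by
    intro x hx p hp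
    exact mem_iInter₂.mp hx.2 p hp
  -- each ball contains exactly one point of f x
  have hsingle : ∀ x ∈ W, ∀ p ∈ f x₀, ∃ y, f x ∩ Metric.ball p ε = {y} := by
    intro x hx p hp
    have hfx : (f x).Finite := (hcard x).1
    set T : Finset Z := hfx.toFinset with hT
    set F : Finset Z := hfin.toFinset with hF
    have hTcard : T.card = n := by
      rw [← Set.ncard_eq_toFinset_card (f x) hfx]; exact (hcard x).2
    have hFcard : F.card = n := by
      rw [← Set.ncard_eq_toFinset_card (f x₀) hfin]; exact hncard
    have hcover : T = F.biUnion (fun q => T.filter (· ∈ Metric.ball q ε)) := by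
      ext y
      simp only [Finset.mem_biUnion, Finset.mem_filter, Set.Finite.mem_toFinset, hT, hF]
      constructor
      · intro hy
        obtain ⟨q, hq, hyq⟩ := mem_iUnion₂.mp (hWsub x hx hy)
        exact ⟨q, hq, hy, hyq⟩
      · rintro ⟨q, hq, hy, _⟩; exact hy
    have hdisj : ∀ q₁ ∈ F, ∀ q₂ ∈ F, q₁ ≠ q₂ →
        Disjoint (T.filter (· ∈ Metric.ball q₁ ε)) (T.filter (· ∈ Metric.ball q₂ ε)) := by
      intro q₁ h₁ q₂ h₂ hne
      rw [Finset.disjoint_left]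
      intro a ha₁ ha₂
      rw [Finset.mem_filter] at ha₁ ha₂
      exact (hballs q₁ (hfin.mem_toFinset.mp h₁) q₂ (hfin.mem_toFinset.mp h₂) hne).ne_of_mem
        ha₁.2 ha₂.2 rfl
    have hsum : ∑ q ∈ F, (T.filter (· ∈ Metric.ball q ε)).card = n := by
      rw [← Finset.card_biUnion hdisj, ← hcover, hTcard]
    have hone : ∀ q ∈ F, (T.filter (· ∈ Metric.ball q ε)).card = 1 := by
      have hle : ∀ q ∈ F, 1 ≤ (T.filter (· ∈ Metric.ball q ε)).card := by
        intro q hq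
        obtain ⟨y, hy⟩ := hWne x hx q (hfin.mem_toFinset.mp hq)
        refine Finset.card_pos.mpr ⟨y, ?_⟩
        rw [Finset.mem_filter]
        exact ⟨hfx.mem_toFinset.mpr hy.1, hy.2⟩
      have heq : ∑ q ∈ F, (1 : ℕ) = ∑ q ∈ F, (T.filter (· ∈ Metric.ball q ε)).card := by
        rw [hsum, Finset.sum_const, smul_eq_mul, mul_one, hFcard]
      intro q hq
      exact ((Finset.sum_eq_sum_iff_of_le hle).mp heq q hq).symm
    obtain ⟨y, hy⟩ := Finset.card_eq_one.mp (hone p (hfin.mem_toFinset.mpr hp))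
    refine ⟨y, ?_⟩
    ext z
    constructor
    · intro hz
      have : z ∈ T.filter (· ∈ Metric.ball p ε) := by
        rw [Finset.mem_filter]; exact ⟨hfx.mem_toFinset.mpr hz.1, hz.2⟩
      rw [hy, Finset.mem_singleton] at this
      exact this
    · intro hz
      rw [mem_singleton_iff] at hz
      subst hz
      have : z ∈ T.filter (· ∈ Metric.ball p ε) := by
        rw [hy]; exact Finset.mem_singleton_self z
      rw [Finset.mem_filter] at this
      exact ⟨hfx.mem_toFinset.mp this.1, this.2⟩
  choose! sel hsel using hsingle
  refine ⟨W, hWo, hx₀W, fun p x => sel x p, ?_, ?_, ?_, ?_, ?_⟩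
  · intro p hp
    have h := hsel x₀ hx₀W p hp
    have : p ∈ ({sel x₀ p} : Set Z) := h ▸ ⟨hp, Metric.mem_ball_self hε⟩
    exact this.symm
  · intro p hp
    rw [continuousOn_iff]
    intro x hx t ht hmem
    refine ⟨{x' | (f x' ∩ (Metric.ball p ε ∩ t)).Nonempty},
      vcont_open_inter hcont (Metric.isOpen_ball.inter ht), ?_, ?_⟩
    · have h := hsel x hx p hp
      have hself : sel x p ∈ f x ∩ Metric.ball p ε := h ▸ rfl
      exact ⟨sel x p, hself.1, hself.2, hmem⟩
    · rintro x' ⟨⟨z, hzf, hzb, hzt⟩, hx'W⟩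
      have h := hsel x' hx'W p hp
      have : z ∈ ({sel x' p} : Set Z) := h ▸ ⟨hzf, hzb⟩
      rw [mem_singleton_iff] at this
      simpa [← this] using hzt
  · intro x hx p hp
    have h := hsel x hx p hp
    have : sel x p ∈ f x ∩ Metric.ball p ε := h ▸ rfl
    exact this.1
  · intro x hx p hp q hq heq
    by_contra hne
    have hp' : sel x p ∈ Metric.ball p ε := ((hsel x hx p hp) ▸ rfl : sel x p ∈ f x ∩ _).2
    have hq' : sel x q ∈ Metric.ball q ε := ((hsel x hx q hq) ▸ rfl : sel x q ∈ f x ∩ _).2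
    simp only at heq
    exact (hballs p hp q hq hne).ne_of_mem hp' (heq ▸ hq') rfl
  · intro x hx y hy
    obtain ⟨p, hp, hyp⟩ := mem_iUnion₂.mp (hWsub x hx hy)
    have h := hsel x hx p hp
    have : y ∈ ({sel x p} : Set Z) := h ▸ ⟨hy, hyp⟩
    exact ⟨p, hp, this⟩

lemma vcont_of_local {X Z : Type*} [TopologicalSpace X] [TopologicalSpace Z] {G : X → Set Z}
    (h : ∀ x₀ : X, ∃ W : Set X, IsOpen W ∧ x₀ ∈ W ∧ ∃ (P : Set Z) (σ : Z → X → Z),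
      P.Finite ∧ (∀ p ∈ P, σ p x₀ = p) ∧ (∀ p ∈ P, ContinuousOn (σ p) W) ∧
      (∀ x ∈ W, G x = (fun p => σ p x) '' P)) : VCont G := by
  have hG0 : ∀ x₀ : X, ∃ W : Set X, IsOpen W ∧ x₀ ∈ W ∧ ∃ (P : Set Z) (σ : Z → X → Z),
      P.Finite ∧ (∀ p ∈ P, σ p x₀ = p) ∧ (∀ p ∈ P, ContinuousOn (σ p) W) ∧
      (∀ x ∈ W, G x = (fun p => σ p x) '' P) ∧ G x₀ = P := by
    intro x₀
    obtain ⟨W, hWo, hx₀, P, σ, hPfin, hσ₀, hσc, himg⟩ := h x₀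
    refine ⟨W, hWo, hx₀, P, σ, hPfin, hσ₀, hσc, himg, ?_⟩
    rw [himg x₀ hx₀]
    ext y
    constructor
    · rintro ⟨p, hp, rfl⟩; simpa [hσ₀ p hp] using hp
    · intro hy; exact ⟨y, hy, hσ₀ y hy⟩
  apply vcont_of
  · intro U hU
    rw [isOpen_iff_forall_mem_open]
    intro x₀ hx₀U
    obtain ⟨W, hWo, hx₀, P, σ, hPfin, hσ₀, hσc, himg, hGx₀⟩ := hG0 x₀
    refine ⟨W ∩ ⋂ p ∈ P, (W ∩ σ p ⁻¹' U), ?_, ?_, ?_⟩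
    · rintro x ⟨hxW, hxI⟩
      rw [mem_setOf_eq, himg x hxW]
      rintro y ⟨p, hp, rfl⟩
      exact (mem_iInter₂.mp hxI p hp).2
    · exact hWo.inter (hPfin.isOpen_biInter fun p hp =>
        (hσc p hp).isOpen_inter_preimage hWo hU)
    · refine ⟨hx₀, mem_iInter₂.mpr fun p hp => ⟨hx₀, ?_⟩⟩
      have : p ∈ G x₀ := hGx₀ ▸ hp
      simpa [mem_preimage, hσ₀ p hp] using hx₀U this
  · intro U hU
    rw [isOpen_iff_forall_mem_open]
    intro x₀ hx₀U
    obtain ⟨W, hWo, hx₀, P, σ, hPfin, hσ₀, hσc, himg, hGx₀⟩ := hG0 x₀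
    obtain ⟨y, hyG, hyU⟩ := hx₀U
    have hyP : y ∈ P := hGx₀ ▸ hyG
    refine ⟨W ∩ σ y ⁻¹' U, ?_, ?_, hx₀, ?_⟩
    · rintro x ⟨hxW, hxU⟩
      exact ⟨σ y x, (himg x hxW) ▸ ⟨y, hyP, rfl⟩, hxU⟩
    · exact (hσc y hyP).isOpen_inter_preimage hWo hU
    · rw [mem_preimage, hσ₀ y hyP]; exact hyU

abbrev gm {m : ℕ} (hm : 0 < m) {A : Set (EuclideanSpace ℝ (Fin m))}
    (f : A → Set (EuclideanSpace ℝ (Fin m))) (x : A) : Set (EuclideanSpace ℝ (Fin m)) :=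
  {y ∈ f x | y ⟨0, hm⟩ = sSup ((fun z => z ⟨0, hm⟩) '' f x)}

lemma key {m n M : ℕ} (hm : 0 < m) (hn : 1 < n) (hM1 : 1 ≤ M) (hMn : M < n)
    {A : Set (EuclideanSpace ℝ (Fin m))}
    {f : A → Set (EuclideanSpace ℝ (Fin m))}
    (hcard : ∀ x, (f x).Finite ∧ (f x).ncard = n)
    (hcont : VCont f)
    (hM : ∀ x, (gm hm f x).ncard = M) (x₀ : A) :
    ∃ W : Set A, IsOpen W ∧ x₀ ∈ W ∧
      ∃ σ : EuclideanSpace ℝ (Fin m) → A → EuclideanSpace ℝ (Fin m),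
      (∀ p ∈ f x₀, σ p x₀ = p) ∧ (∀ p ∈ f x₀, ContinuousOn (σ p) W) ∧
      ∀ x ∈ W, gm hm f x = (fun p => σ p x) '' gm hm f x₀ ∧
        f x \ gm hm f x = (fun p => σ p x) '' (f x₀ \ gm hm f x₀) := by
  classical
  have hπc : Continuous (fun z : EuclideanSpace ℝ (Fin m) => z ⟨0, hm⟩) :=
    (EuclideanSpace.proj (⟨0, hm⟩ : Fin m)).continuous
  obtain ⟨W, hWo, hx₀W, σ, hσ₀, hσc, hσmem, hσinj, hσsurj⟩ :=
    local_struct (n := n) (by omega) hcard hcont x₀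
  have hfin := (hcard x₀).1
  have hG₀sub : gm hm f x₀ ⊆ f x₀ := fun y hy => hy.1
  have hG₀fin : (gm hm f x₀).Finite := hfin.subset hG₀sub
  have hG₀ne : (gm hm f x₀).Nonempty := nonempty_of_ncard_ne_zero (by rw [hM x₀]; omega)
  obtain ⟨q₀, hq₀⟩ := hG₀ne
  have hq₀S : q₀ ∈ f x₀ := hq₀.1
  have hsup_le : ∀ (x : A), ∀ y ∈ f x,
      y ⟨0, hm⟩ ≤ sSup ((fun z => z ⟨0, hm⟩) '' f x) := by
    intro x y hy
    exact le_csSup (((hcard x).1.image _).bddAbove) ⟨y, hy, rfl⟩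
  have hlt : ∀ p ∈ f x₀ \ gm hm f x₀, p ⟨0, hm⟩ < q₀ ⟨0, hm⟩ := by
    intro p hp
    have h1 : p ⟨0, hm⟩ ≤ sSup ((fun z => z ⟨0, hm⟩) '' f x₀) := hsup_le x₀ p hp.1
    have h2 : p ⟨0, hm⟩ ≠ sSup ((fun z => z ⟨0, hm⟩) '' f x₀) := fun h => hp.2 ⟨hp.1, h⟩
    rw [hq₀.2]
    exact lt_of_le_of_ne h1 h2
  set c : EuclideanSpace ℝ (Fin m) → ℝ := fun p => (p ⟨0, hm⟩ + q₀ ⟨0, hm⟩) / 2 with hc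
  set W' : Set A := W ∩ ⋂ p ∈ f x₀ \ gm hm f x₀,
      ((W ∩ σ p ⁻¹' {z | z ⟨0, hm⟩ < c p}) ∩ (W ∩ σ q₀ ⁻¹' {z | c p < z ⟨0, hm⟩})) with hW'
  have hW'o : IsOpen W' := by
    refine hWo.inter ((hfin.subset diff_subset).isOpen_biInter fun p hp => ?_)
    refine IsOpen.inter ?_ ?_
    · exact (hσc p hp.1).isOpen_inter_preimage hWo (isOpen_lt hπc continuous_const)
    · exact (hσc q₀ hq₀S).isOpen_inter_preimage hWo (isOpen_lt continuous_const hπc)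
  have hx₀W' : x₀ ∈ W' := by
    refine ⟨hx₀W, mem_iInter₂.mpr fun p hp => ⟨⟨hx₀W, ?_⟩, ⟨hx₀W, ?_⟩⟩⟩
    · rw [mem_preimage, hσ₀ p hp.1]
      show p ⟨0, hm⟩ < c p
      have := hlt p hp
      simp only [hc]
      linarith
    · rw [mem_preimage, hσ₀ q₀ hq₀S]
      show c p < q₀ ⟨0, hm⟩
      have := hlt p hp
      simp only [hc]
      linarith
  refine ⟨W', hW'o, hx₀W', σ, hσ₀,
    fun p hp => (hσc p hp).mono inter_subset_left, fun x hx => ?_⟩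
  obtain ⟨hxW, hxI⟩ := hx
  have hnot : ∀ p ∈ f x₀ \ gm hm f x₀, σ p x ∉ gm hm f x := by
    intro p hp hmem
    have h1 := (mem_iInter₂.mp hxI p hp).1.2
    have h2 := (mem_iInter₂.mp hxI p hp).2.2
    rw [mem_preimage, mem_setOf_eq] at h1 h2
    have h3 : (σ q₀ x) ⟨0, hm⟩ ≤ sSup ((fun z => z ⟨0, hm⟩) '' f x) :=
      hsup_le x _ (hσmem x hxW q₀ hq₀S)
    have h4 : (σ p x) ⟨0, hm⟩ = sSup ((fun z => z ⟨0, hm⟩) '' f x) := hmem.2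
    linarith
  have hsub : gm hm f x ⊆ (fun p => σ p x) '' gm hm f x₀ := by
    intro y hy
    obtain ⟨p, hpS, rfl⟩ := hσsurj x hxW y hy.1
    refine ⟨p, ?_, rfl⟩
    by_contra hpG
    exact hnot p ⟨hpS, hpG⟩ hy
  have himgcard : ((fun p => σ p x) '' gm hm f x₀).ncard = M := by
    rw [Set.ncard_image_of_injOn ((hσinj x hxW).mono hG₀sub), hM x₀]
  have hgeq : gm hm f x = (fun p => σ p x) '' gm hm f x₀ :=
    Set.eq_of_subset_of_ncard_le hsub (by rw [himgcard, hM x]) (hG₀fin.image _)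
  refine ⟨hgeq, ?_⟩
  ext y
  constructor
  · rintro ⟨hyf, hyg⟩
    obtain ⟨p, hpS, rfl⟩ := hσsurj x hxW y hyf
    refine ⟨p, ⟨hpS, fun hpG => hyg ?_⟩, rfl⟩
    rw [hgeq]
    exact ⟨p, hpG, rfl⟩
  · rintro ⟨p, ⟨hpS, hpG⟩, rfl⟩
    exact ⟨hσmem x hxW p hpS, hnot p ⟨hpS, hpG⟩⟩

theorem stmt5 {m n M : ℕ} (hm : 0 < m) (hn : 1 < n) (hM1 : 1 ≤ M) (hMn : M < n)
    (A : Set (EuclideanSpace ℝ (Fin m))) (hA : IsClosed A)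
    (f : A → Set (EuclideanSpace ℝ (Fin m)))
    (hcard : ∀ x, (f x).Finite ∧ (f x).ncard = n)
    (hcont : VCont f)
    (hM : ∀ x, {y ∈ f x | y ⟨0, hm⟩ = sSup ((fun z => z ⟨0, hm⟩) '' f x)}.ncard = M) :
    (∀ x, ({y ∈ f x | y ⟨0, hm⟩ = sSup ((fun z => z ⟨0, hm⟩) '' f x)}).Nonempty ∧
        ({y ∈ f x | y ⟨0, hm⟩ = sSup ((fun z => z ⟨0, hm⟩) '' f x)}).ncard ≤ n - 1) ∧
    (∀ x, (f x \ {y ∈ f x | y ⟨0, hm⟩ = sSup ((fun z => z ⟨0, hm⟩) '' f x)}).Nonempty ∧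
        (f x \ {y ∈ f x | y ⟨0, hm⟩ = sSup ((fun z => z ⟨0, hm⟩) '' f x)}).ncard ≤ n - 1) ∧
    VCont (fun x => {y ∈ f x | y ⟨0, hm⟩ = sSup ((fun z => z ⟨0, hm⟩) '' f x)}) ∧
    VCont (fun x => f x \ {y ∈ f x | y ⟨0, hm⟩ = sSup ((fun z => z ⟨0, hm⟩) '' f x)}) := by
  have hgm : ∀ x, (gm hm f x).ncard = M := hM
  have hsubx : ∀ x : A, gm hm f x ⊆ f x := fun x y hy => hy.1
  have h1 : ∀ x : A, (gm hm f x).Nonempty ∧ (gm hm f x).ncard ≤ n - 1 := by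
    intro x
    refine ⟨nonempty_of_ncard_ne_zero (by rw [hgm x]; omega), by rw [hgm x]; omega⟩
  have h2 : ∀ x : A, (f x \ gm hm f x).Nonempty ∧ (f x \ gm hm f x).ncard ≤ n - 1 := by
    intro x
    have hd : (f x \ gm hm f x).ncard = n - M := by
      rw [Set.ncard_diff (hsubx x) ((hcard x).1.subset (hsubx x)), (hcard x).2, hgm x]
    refine ⟨nonempty_of_ncard_ne_zero (by rw [hd]; omega), by rw [hd]; omega⟩
  have hkey := key hm hn hM1 hMn hcard hcont hgm
  have h3 : VCont (gm hm f) := by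
    apply vcont_of_local
    intro x₀
    obtain ⟨W, hWo, hx₀, σ, hσ₀, hσc, hW⟩ := hkey x₀
    exact ⟨W, hWo, hx₀, gm hm f x₀, σ, (hcard x₀).1.subset (hsubx x₀),
      fun p hp => hσ₀ p (hsubx x₀ hp), fun p hp => hσc p (hsubx x₀ hp),
      fun x hx => (hW x hx).1⟩
  have h4 : VCont (fun x => f x \ gm hm f x) := by
    apply vcont_of_local
    intro x₀
    obtain ⟨W, hWo, hx₀, σ, hσ₀, hσc, hW⟩ := hkey x₀
    exact ⟨W, hWo, hx₀, f x₀ \ gm hm f x₀, σ, (hcard x₀).1.subset diff_subset,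
      fun p hp => hσ₀ p hp.1, fun p hp => hσc p hp.1,
      fun x hx => (hW x hx).2⟩
  exact ⟨h1, h2, h3, h4⟩
end

section
/- Let n > M ≥ 1, let A be a closed subset of ℝ^m, and let f : A → exp_n(ℝ^m) \ exp_{n-1}(ℝ^m) be continuous and fixed-point free with |{ y ∈ f(x) : π₁(y) = max π₁(f(x)) }| = M for all x ∈ A. If every continuous fixed-point free map from a closed subset of ℝ^m into exp_{n-1}(ℝ^m) is colorable by at most K bright colors, then f is colorable by at most K² bright colors. -/
open Set

/-!
Write `T x` for the points of `f x` with maximal first coordinate and `B x = f x \ T x`.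
Near a point `x₀`, a level `c` strictly between the top value and the other values of `f x₀`
splits `f x` into the points above `c` and those below `c`. Since the number of points of `f x`
in an open set is lower semicontinuous and the numbers of points of `T x` and of `f x` are
constant, `T x` and `B x` are exactly these two halves near `x₀`, so both are Vietoris
continuous. Each has fewer than `n` points and inherits fixed-point freeness from `f`, so each
is colorable by `K` bright colors, and the pairwise intersections of their colors are bright
colors of `f`.
-/

open Filter Topology

namespace VCont

variable {X Z : Type*} [TopologicalSpace X] [TopologicalSpace Z] {f g : X → Set Z}

theorem isOpen_setOf_subset (hf : VCont f) {U : Set Z} (hU : IsOpen U) :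
    IsOpen {x | f x ⊆ U} :=
  @Continuous.isOpen_preimage X (Set Z) _ (vietoris Z) f hf _
    (TopologicalSpace.isOpen_generateFrom_of_mem (Or.inl ⟨U, hU, rfl⟩))

theorem isOpen_setOf_inter_nonempty (hf : VCont f) {U : Set Z} (hU : IsOpen U) :
    IsOpen {x | (f x ∩ U).Nonempty} :=
  @Continuous.isOpen_preimage X (Set Z) _ (vietoris Z) f hf _
    (TopologicalSpace.isOpen_generateFrom_of_mem (Or.inr ⟨U, hU, rfl⟩))

theorem of_isOpen (h₁ : ∀ U : Set Z, IsOpen U → IsOpen {x | f x ⊆ U})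
    (h₂ : ∀ U : Set Z, IsOpen U → IsOpen {x | (f x ∩ U).Nonempty}) : VCont f := by
  rw [VCont, vietoris, continuous_generateFrom_iff]
  rintro s (⟨U, hU, rfl⟩ | ⟨U, hU, rfl⟩)
  exacts [h₁ U hU, h₂ U hU]

theorem eventually_subset (hf : VCont f) {U : Set Z} (hU : IsOpen U) {x₀ : X}
    (h : f x₀ ⊆ U) : ∀ᶠ x in 𝓝 x₀, f x ⊆ U :=
  (hf.isOpen_setOf_subset hU).mem_nhds h

theorem eventually_inter_nonempty (hf : VCont f) {U : Set Z} (hU : IsOpen U) {x₀ : X}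
    (h : (f x₀ ∩ U).Nonempty) : ∀ᶠ x in 𝓝 x₀, (f x ∩ U).Nonempty :=
  (hf.isOpen_setOf_inter_nonempty hU).mem_nhds h

theorem eventually_ncard_inter_le [T2Space Z] (hf : VCont f) (hfin : ∀ x, (f x).Finite)
    {U : Set Z} (hU : IsOpen U) (x₀ : X) :
    ∀ᶠ x in 𝓝 x₀, (f x₀ ∩ U).ncard ≤ (f x ∩ U).ncard := by
  obtain ⟨V, hV, hdisj⟩ := ((hfin x₀).inter_of_left U).t2_separation
  have hhit : ∀ᶠ x in 𝓝 x₀, ∀ y ∈ f x₀ ∩ U, (f x ∩ (U ∩ V y)).Nonempty :=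
    ((hfin x₀).inter_of_left U).eventually_all.2 fun y hy =>
      hf.eventually_inter_nonempty (hU.inter (hV y).2) ⟨y, hy.1, hy.2, (hV y).1⟩
  filter_upwards [hhit] with x hx
  have hsel : ∀ y, ∃ z, y ∈ f x₀ ∩ U → z ∈ f x ∩ (U ∩ V y) := fun y => by
    by_cases hy : y ∈ f x₀ ∩ U
    exacts [(hx y hy).imp fun _ hz _ => hz, ⟨y, fun h => (hy h).elim⟩]
  choose p hp using hsel
  refine ncard_le_ncard_of_injOn p (fun y hy => ⟨(hp y hy).1, (hp y hy).2.1⟩)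
    (fun y hy y' hy' heq => hdisj.elim hy hy'
      (not_disjoint_iff.2 ⟨p y, (hp y hy).2.2, heq ▸ (hp y' hy').2.2⟩))
    ((hfin x).inter_of_left U)

theorem of_eventually_eq_inter (hf : VCont f)
    (h : ∀ x₀, ∃ U L : Set Z, IsOpen U ∧ IsOpen L ∧ Disjoint U L ∧ f x₀ ⊆ U ∪ L ∧
      ∀ᶠ x in 𝓝 x₀, g x = f x ∩ U) : VCont g := by
  refine of_isOpen (fun V hV => isOpen_iff_mem_nhds.2 fun x₀ hx₀ => ?_)
    (fun V hV => isOpen_iff_mem_nhds.2 fun x₀ hx₀ => ?_) <;>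
  obtain ⟨U, L, hU, hL, hUL, hsplit, hg⟩ := h x₀
  · have hsplit' : f x₀ ⊆ U ∩ V ∪ L := fun y hy =>
      (hsplit hy).imp_left fun hyU => ⟨hyU, hx₀ (hg.self_of_nhds ▸ ⟨hy, hyU⟩)⟩
    filter_upwards [hg, hf.eventually_subset ((hU.inter hV).union hL) hsplit'] with x hgx hfx
    rintro y hy
    rw [hgx] at hy
    exact ((hfx hy.1).resolve_right (hUL.notMem_of_mem_left hy.2)).2
  · obtain ⟨y, hy, hyV⟩ := hx₀
    rw [hg.self_of_nhds] at hy
    filter_upwards [hg, hf.eventually_inter_nonempty (hU.inter hV) ⟨y, hy.1, hy.2, hyV⟩]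
      with x hgx ⟨z, hz, hzU, hzV⟩
    exact ⟨z, hgx ▸ ⟨hz, hzU⟩, hzV⟩

end VCont

section TopPart

variable {Z : Type*}

def topPart (φ : Z → ℝ) (S : Set Z) : Set Z := {y ∈ S | φ y = sSup (φ '' S)}

theorem topPart_subset (φ : Z → ℝ) (S : Set Z) : topPart φ S ⊆ S := sep_subset _ _

theorem topPart_nonempty (φ : Z → ℝ) {S : Set Z} (hS : S.Finite) (hne : S.Nonempty) :
    (topPart φ S).Nonempty := by
  obtain ⟨y, hy, hφy⟩ := (hne.image φ).csSup_mem (hS.image φ)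
  exact ⟨y, hy, hφy⟩

theorem exists_topPart_eq_inter (φ : Z → ℝ) {S : Set Z} (hS : S.Finite) :
    ∃ c : ℝ, topPart φ S = S ∩ {z | c < φ z} ∧ S \ topPart φ S = S ∩ {z | φ z < c} := by
  -- the extra value `sSup (φ '' S) - 1` keeps the set nonempty
  set s := insert (sSup (φ '' S) - 1) (φ '' (S \ topPart φ S))
  have hs : s.Finite := (hS.sdiff.image φ).insert _
  have hlt : sSup s < sSup (φ '' S) := by
    rw [hs.csSup_lt_iff (insert_nonempty _ _)]
    rintro _ (rfl | ⟨y, ⟨hyS, hyT⟩, rfl⟩)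
    · linarith
    · exact (le_csSup (hS.image φ).bddAbove (mem_image_of_mem φ hyS)).lt_of_ne
        fun h => hyT ⟨hyS, h⟩
  obtain ⟨c, hsc, hc⟩ := exists_between hlt
  have hcB : ∀ y ∈ S \ topPart φ S, φ y < c := fun y hy =>
    (le_csSup hs.bddAbove (mem_insert_of_mem _ (mem_image_of_mem φ hy))).trans_lt hsc
  refine ⟨c, Subset.antisymm (fun y hy => ⟨hy.1, show c < φ y from hy.2 ▸ hc⟩) ?_,
    Subset.antisymm (fun y hy => ⟨hy.1, hcB y hy⟩) ?_⟩
  · exact fun y hy => by_contra fun hyT => lt_asymm hy.2 (hcB y ⟨hy.1, hyT⟩)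
  · exact fun y hy => ⟨hy.1, fun hyT => lt_asymm (show c < φ y from hyT.2 ▸ hc) hy.2⟩

theorem topPart_eq_inter_of_ncard_le {φ : Z → ℝ} {S : Set Z} (hS : S.Finite) {c : ℝ}
    (hsplit : S ⊆ {z | c < φ z} ∪ {z | φ z < c})
    (hcardU : (topPart φ S).ncard ≤ (S ∩ {z | c < φ z}).ncard)
    (hcardL : S.ncard - (topPart φ S).ncard ≤ (S ∩ {z | φ z < c}).ncard) :
    topPart φ S = S ∩ {z | c < φ z} ∧ S \ topPart φ S = S ∩ {z | φ z < c} := by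
  have hdiff : S ∩ {z | φ z < c} = S \ {z | c < φ z} := Subset.antisymm
    (fun y hy => ⟨hy.1, fun (h : c < φ y) => lt_asymm h hy.2⟩)
    fun y hy => ⟨hy.1, (hsplit hy.1).resolve_left hy.2⟩
  have hsum := ncard_inter_add_ncard_sdiff_eq_ncard S {z | c < φ z} hS
  rw [← hdiff] at hsum
  have hTU : topPart φ S ⊆ S ∩ {z | c < φ z} := by
    intro a ha
    have hT : 0 < (topPart φ S).ncard := (ncard_pos (hS.subset (topPart_subset φ S))).2 ⟨a, ha⟩
    obtain ⟨b, hb, hbU⟩ := (ncard_pos (hS.inter_of_left {z | c < φ z})).1 (by omega)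
    refine ⟨ha.1, show c < φ a from ha.2 ▸ hbU.trans_le ?_⟩
    exact le_csSup (hS.image φ).bddAbove (mem_image_of_mem φ hb)
  have hTS := ncard_le_ncard (topPart_subset φ S) hS
  have hTeq : topPart φ S = S ∩ {z | c < φ z} :=
    eq_of_subset_of_ncard_le hTU (by omega) (hS.inter_of_left _)
  exact ⟨hTeq, by rw [hTeq, sdiff_self_inter, hdiff]⟩

variable {X : Type*} [TopologicalSpace X] [TopologicalSpace Z] [T2Space Z] {f : X → Set Z}
  {φ : Z → ℝ} {n M : ℕ}

theorem VCont.eventually_topPart_eq (hf : VCont f) (hφ : Continuous φ)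
    (hfin : ∀ x, (f x).Finite) (hcard : ∀ x, (f x).ncard = n)
    (hM : ∀ x, (topPart φ (f x)).ncard = M) (x₀ : X) :
    ∃ U L : Set Z, IsOpen U ∧ IsOpen L ∧ Disjoint U L ∧ f x₀ ⊆ U ∪ L ∧
      ∀ᶠ x in 𝓝 x₀, topPart φ (f x) = f x ∩ U ∧ f x \ topPart φ (f x) = f x ∩ L := by
  obtain ⟨c, hT₀, hB₀⟩ := exists_topPart_eq_inter φ (hfin x₀)
  have hU : IsOpen {z | c < φ z} := isOpen_lt continuous_const hφ
  have hL : IsOpen {z | φ z < c} := isOpen_lt hφ continuous_const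
  have hsplit : f x₀ ⊆ {z | c < φ z} ∪ {z | φ z < c} := fun y hy => by
    by_cases hyT : y ∈ topPart φ (f x₀)
    · exact Or.inl (hT₀ ▸ hyT).2
    · have hyB : y ∈ f x₀ \ topPart φ (f x₀) := ⟨hy, hyT⟩
      exact Or.inr (hB₀ ▸ hyB).2
  refine ⟨_, _, hU, hL, disjoint_left.2 fun _ (h : c < _) h' => lt_asymm h h', hsplit, ?_⟩
  filter_upwards [hf.eventually_subset (hU.union hL) hsplit,
    hf.eventually_ncard_inter_le hfin hU x₀, hf.eventually_ncard_inter_le hfin hL x₀]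
    with x hxUL hxU hxL
  rw [← hT₀, hM] at hxU
  rw [← hB₀, ncard_sdiff (topPart_subset φ _) ((hfin x₀).subset (topPart_subset φ _)), hcard,
    hM] at hxL
  exact topPart_eq_inter_of_ncard_le (hfin x) hxUL (by rwa [hM x]) (by rwa [hM x, hcard x])

theorem vcont_topPart (hf : VCont f) (hφ : Continuous φ) (hfin : ∀ x, (f x).Finite)
    (hcard : ∀ x, (f x).ncard = n) (hM : ∀ x, (topPart φ (f x)).ncard = M) :
    VCont fun x => topPart φ (f x) :=
  hf.of_eventually_eq_inter fun x₀ => by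
    obtain ⟨U, L, hU, hL, hUL, hsplit, hev⟩ := hf.eventually_topPart_eq hφ hfin hcard hM x₀
    exact ⟨U, L, hU, hL, hUL, hsplit, hev.mono fun _ h => h.1⟩

theorem vcont_sdiff_topPart (hf : VCont f) (hφ : Continuous φ) (hfin : ∀ x, (f x).Finite)
    (hcard : ∀ x, (f x).ncard = n) (hM : ∀ x, (topPart φ (f x)).ncard = M) :
    VCont fun x => f x \ topPart φ (f x) :=
  hf.of_eventually_eq_inter fun x₀ => by
    obtain ⟨U, L, hU, hL, hUL, hsplit, hev⟩ := hf.eventually_topPart_eq hφ hfin hcard hM x₀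
    exact ⟨L, U, hL, hU, hUL.symm, union_comm U L ▸ hsplit, hev.mono fun _ h => h.2⟩

end TopPart

theorem BrightColorable.of_subset_union {Z : Type*} [TopologicalSpace Z] {X : Set Z}
    {f g₁ g₂ : X → Set Z} {K₁ K₂ : ℕ} (h₁ : BrightColorable g₁ K₁)
    (h₂ : BrightColorable g₂ K₂) (hf : ∀ x, f x ⊆ g₁ x ∪ g₂ x) :
    BrightColorable f (K₁ * K₂) := by
  classical
  obtain ⟨𝓕₁, hcard₁, hcover₁, hbright₁⟩ := h₁
  obtain ⟨𝓕₂, hcard₂, hcover₂, hbright₂⟩ := h₂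
  refine ⟨(𝓕₁ ×ˢ 𝓕₂).image fun p => p.1 ∩ p.2, ?_, fun x => ?_, ?_⟩
  · calc _ ≤ (𝓕₁ ×ˢ 𝓕₂).card := Finset.card_image_le
      _ = 𝓕₁.card * 𝓕₂.card := Finset.card_product _ _
      _ ≤ K₁ * K₂ := Nat.mul_le_mul hcard₁ hcard₂
  · obtain ⟨F, hF, hxF⟩ := hcover₁ x
    obtain ⟨G, hG, hxG⟩ := hcover₂ x
    exact ⟨F ∩ G, Finset.mem_image.2 ⟨(F, G), Finset.mem_product.2 ⟨hF, hG⟩, rfl⟩, hxF, hxG⟩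
  · simp only [Finset.mem_image, Finset.mem_product, Prod.exists]
    rintro _ ⟨F, G, ⟨hF, hG⟩, rfl⟩
    obtain ⟨hFc, hFd⟩ := hbright₁ F hF
    obtain ⟨hGc, hGd⟩ := hbright₂ G hG
    have hsub : ⋃ x ∈ F ∩ G, f x ⊆ (⋃ x ∈ F, g₁ x) ∪ ⋃ x ∈ G, g₂ x := by
      simp only [iUnion_subset_iff]
      exact fun x hx => (hf x).trans (union_subset_union
        (subset_biUnion_of_mem hx.1) (subset_biUnion_of_mem hx.2))
    refine ⟨hFc.inter hGc, Disjoint.mono_right ((closure_mono hsub).trans closure_union.subset)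
      (disjoint_union_right.2 ⟨?_, ?_⟩)⟩
    exacts [hFd.mono_left (image_mono inter_subset_left),
      hGd.mono_left (image_mono inter_subset_right)]

theorem stmt6_general {m n M K : ℕ} (hm : 0 < m) (hMn : M < n)
    (A : Set (EuclideanSpace ℝ (Fin m))) (hA : IsClosed A)
    (f : A → Set (EuclideanSpace ℝ (Fin m)))
    (hcard : ∀ x, (f x).Finite ∧ (f x).ncard = n)
    (hcont : VCont f)
    (hfree : ∀ x : A, (x : EuclideanSpace ℝ (Fin m)) ∉ f x)
    (hM : ∀ x, {y ∈ f x | y ⟨0, hm⟩ = sSup ((fun z => z ⟨0, hm⟩) '' f x)}.ncard = M)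
    (hK : ∀ (B : Set (EuclideanSpace ℝ (Fin m))), IsClosed B →
      ∀ g : B → Set (EuclideanSpace ℝ (Fin m)),
        (∀ x, (g x).Nonempty ∧ (g x).Finite ∧ (g x).ncard ≤ n - 1) →
        VCont g → (∀ x : B, (x : EuclideanSpace ℝ (Fin m)) ∉ g x) →
        BrightColorable g K) :
    BrightColorable f (K ^ 2) := by
  set φ : EuclideanSpace ℝ (Fin m) → ℝ := fun z => z ⟨0, hm⟩
  have hφ : Continuous φ := by fun_prop
  have hM' : ∀ x, (topPart φ (f x)).ncard = M := hM
  have hfin x := (hcard x).1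
  have hncard x := (hcard x).2
  have hfinT x : (topPart φ (f x)).Finite := (hfin x).subset (topPart_subset φ _)
  have hT x : (topPart φ (f x)).Nonempty :=
    topPart_nonempty φ (hfin x) (nonempty_of_ncard_ne_zero (by rw [hncard x]; omega))
  have hM0 x : 0 < M := hM' x ▸ (ncard_pos (hfinT x)).2 (hT x)
  have hB x : (f x \ topPart φ (f x)).ncard = n - M := by
    rw [ncard_sdiff (topPart_subset φ _) (hfinT x), hncard x, hM' x]
  have hcolT : BrightColorable (fun x => topPart φ (f x)) K :=
    hK A hA _ (fun x => ⟨hT x, hfinT x, by rw [hM' x]; omega⟩)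
      (vcont_topPart hcont hφ hfin hncard hM') fun x hx => hfree x hx.1
  have hcolB : BrightColorable (fun x => f x \ topPart φ (f x)) K :=
    hK A hA _ (fun x => ⟨nonempty_of_ncard_ne_zero (by rw [hB x]; omega), (hfin x).sdiff,
        by rw [hB x]; have := hM0 x; omega⟩)
      (vcont_sdiff_topPart hcont hφ hfin hncard hM') fun x hx => hfree x hx.1
  rw [sq]
  exact hcolT.of_subset_union hcolB fun x => (union_sdiff_cancel (topPart_subset φ _)).symm.subset

theorem stmt6 {m n M K : ℕ} (hm : 0 < m) (hM1 : 1 ≤ M) (hMn : M < n)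
    (A : Set (EuclideanSpace ℝ (Fin m))) (hA : IsClosed A)
    (f : A → Set (EuclideanSpace ℝ (Fin m)))
    (hcard : ∀ x, (f x).Finite ∧ (f x).ncard = n)
    (hcont : VCont f)
    (hfree : ∀ x : A, (x : EuclideanSpace ℝ (Fin m)) ∉ f x)
    (hM : ∀ x, {y ∈ f x | y ⟨0, hm⟩ = sSup ((fun z => z ⟨0, hm⟩) '' f x)}.ncard = M)
    (hK : ∀ (B : Set (EuclideanSpace ℝ (Fin m))), IsClosed B →
      ∀ g : B → Set (EuclideanSpace ℝ (Fin m)),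
        (∀ x, (g x).Nonempty ∧ (g x).Finite ∧ (g x).ncard ≤ n - 1) →
        VCont g → (∀ x : B, (x : EuclideanSpace ℝ (Fin m)) ∉ g x) →
        BrightColorable g K) :
    BrightColorable f (K ^ 2) :=
  stmt6_general hm hMn A hA f hcard hcont hfree hM hK
end

section
/- Let Z be a normal topological space and X a closed subspace of Z, and let f : X → 𝒦(Z) be a continuous map into the space of nonempty compact subsets of Z with the Vietoris topology. If 𝓕 is a finite bright coloring of f, then { cl_{βZ}(F) : F ∈ 𝓕 } (equivalently, {βF : F ∈ 𝓕}) is a bright coloring of the continuous extension f̃ : βX → 𝒦(βZ). -/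
/-!
Every point of `βX` lies in the closure of one of the finitely many `βF`, since `X` is dense.
For a colour `F`, Urysohn's lemma separates the disjoint closed sets `F` and
`cl(⋃_{x ∈ F} f x)` by a function `Z → [0,1]`; its extension to `βZ` keeps the two closures
in `βZ` apart. The closure of the image of `βF` under `ι` lies on the first side, and since
`{A | A ⊆ C}` is Vietoris-closed for closed `C`, every `f̃ p` with `p ∈ βF` lies on the second.
-/

open Set

section Vietoris

open scoped Topology

variable {Y W : Type*} [TopologicalSpace Y] [TopologicalSpace W]

theorem isClosed_setOf_subset_vietoris {C : Set W} (hC : IsClosed C) :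
    IsClosed[vietoris W] {A | A ⊆ C} := by
  have hopen : IsOpen[vietoris W] {A : Set W | (A ∩ Cᶜ).Nonempty} :=
    TopologicalSpace.GenerateOpen.basic _ (Or.inr ⟨Cᶜ, hC.isOpen_compl, rfl⟩)
  have hcompl : {A : Set W | A ⊆ C} = {A : Set W | (A ∩ Cᶜ).Nonempty}ᶜ := by
    ext A
    simp [inter_compl_nonempty_iff]
  rw [hcompl]
  exact @IsOpen.isClosed_compl _ (vietoris W) _ hopen

theorem VCont.isClosed_setOf_subset {g : Y → Set W} (hg : VCont g) {C : Set W}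
    (hC : IsClosed C) : IsClosed {y | g y ⊆ C} :=
  @IsClosed.preimage _ _ _ (vietoris W) g hg _ (isClosed_setOf_subset_vietoris hC)

theorem VCont.closure_biUnion_closure_subset {g : Y → Set W} (hg : VCont g) {S : Set Y}
    {C : Set W} (hC : IsClosed C) (h : ∀ y ∈ S, g y ⊆ C) :
    closure (⋃ y ∈ closure S, g y) ⊆ C :=
  closure_minimal (iUnion₂_subset fun _ hy =>
    closure_minimal h (hg.isClosed_setOf_subset hC) hy) hC

end Vietoris

theorem DenseRange.exists_mem_closure_image_of_cover {X Y : Type*} [TopologicalSpace Y]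
    {u : X → Y} (hu : DenseRange u) (𝓕 : Finset (Set X)) (hcover : ∀ x, ∃ F ∈ 𝓕, x ∈ F)
    (y : Y) : ∃ F ∈ 𝓕, y ∈ closure (u '' F) := by
  have hrange : range u ⊆ ⋃ F ∈ 𝓕, u '' F := by
    rintro _ ⟨x, rfl⟩
    obtain ⟨F, hF, hxF⟩ := hcover x
    exact mem_biUnion hF (mem_image_of_mem u hxF)
  have hy := closure_mono hrange (hu y)
  rw [𝓕.closure_biUnion] at hy
  simpa using hy

theorem closure_image_stoneCechUnit_subset_preimage {Z K : Type*} [TopologicalSpace Z]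
    [TopologicalSpace K] [CompactSpace K] [T2Space K] {g : Z → K} (hg : Continuous g)
    {A : Set Z} {T : Set K} (hT : IsClosed T) (hA : MapsTo g A T) :
    closure (stoneCechUnit '' A) ⊆ stoneCechExtend hg ⁻¹' T := by
  refine closure_minimal ?_ (hT.preimage (continuous_stoneCechExtend hg))
  rintro _ ⟨z, hz, rfl⟩
  rw [mem_preimage, stoneCechExtend_stoneCechUnit]
  exact hA hz

theorem disjoint_closure_image_stoneCechUnit {Z : Type*} [TopologicalSpace Z] [NormalSpace Z]
    {A B : Set Z} (hA : IsClosed A) (hB : IsClosed B) (hAB : Disjoint A B) :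
    Disjoint (closure (stoneCechUnit '' A)) (closure (stoneCechUnit '' B)) := by
  obtain ⟨g, hg0, hg1, hg01⟩ := exists_continuous_zero_one_of_isClosed hA hB hAB
  let g' : Z → unitInterval := fun z => ⟨g z, hg01 z⟩
  have hg' : Continuous g' := g.continuous.subtype_mk _
  have h0 : closure (stoneCechUnit '' A) ⊆ stoneCechExtend hg' ⁻¹' {0} :=
    closure_image_stoneCechUnit_subset_preimage hg' isClosed_singleton
      fun _ hz => Subtype.ext (hg0 hz)
  have h1 : closure (stoneCechUnit '' B) ⊆ stoneCechExtend hg' ⁻¹' {1} :=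
    closure_image_stoneCechUnit_subset_preimage hg' isClosed_singleton
      fun _ hz => Subtype.ext (hg1 hz)
  exact ((disjoint_singleton.mpr zero_ne_one).preimage _).mono h0 h1

theorem stmt11_general {Z : Type*} [TopologicalSpace Z] [NormalSpace Z]
    (X : Set Z) (hX : IsClosed X)
    (f : X → Set Z)
    (ftil : StoneCech X → Set (StoneCech Z))
    (hftilcont : VCont ftil)
    (hftilext : ∀ x : X, ftil (stoneCechUnit x) = stoneCechUnit '' f x)
    (ι : StoneCech X → StoneCech Z)
    (hιcont : Continuous ι)
    (hιext : ∀ x : X, ι (stoneCechUnit x) = stoneCechUnit (x : Z))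
    (𝓕 : Finset (Set X))
    (hcover : ∀ x : X, ∃ F ∈ 𝓕, x ∈ F)
    (hbright : ∀ F ∈ 𝓕, IsClosed F ∧
      Disjoint (Subtype.val '' F) (closure (⋃ x ∈ F, f x))) :
    (∀ p : StoneCech X, ∃ F ∈ 𝓕, p ∈ closure (stoneCechUnit '' F)) ∧
    ∀ F ∈ 𝓕, IsClosed (closure (stoneCechUnit '' F)) ∧
      Disjoint (ι '' closure (stoneCechUnit '' F))
        (closure (⋃ p ∈ closure (stoneCechUnit '' F), ftil p)) := by
  refine ⟨denseRange_stoneCechUnit.exists_mem_closure_image_of_cover 𝓕 hcover, fun F hF => ?_⟩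
  obtain ⟨hFclosed, hdisj⟩ := hbright F hF
  have hleft :
      ι '' closure (stoneCechUnit '' F) ⊆ closure (stoneCechUnit '' (Subtype.val '' F)) := by
    refine (image_closure_subset_closure_image hιcont).trans (closure_mono ?_)
    rintro _ ⟨_, ⟨x, hx, rfl⟩, rfl⟩
    exact ⟨x, mem_image_of_mem _ hx, (hιext x).symm⟩
  have hright : closure (⋃ p ∈ closure (stoneCechUnit '' F), ftil p) ⊆
      closure (stoneCechUnit '' closure (⋃ x ∈ F, f x)) := by
    refine hftilcont.closure_biUnion_closure_subset isClosed_closure ?_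
    rintro _ ⟨x, hx, rfl⟩
    rw [hftilext]
    exact (image_mono ((subset_biUnion_of_mem hx).trans subset_closure)).trans subset_closure
  exact ⟨isClosed_closure, (disjoint_closure_image_stoneCechUnit
    (hX.isClosedMap_subtype_val _ hFclosed) isClosed_closure hdisj).mono hleft hright⟩

theorem stmt11 {Z : Type*} [TopologicalSpace Z] [NormalSpace Z]
    (X : Set Z) (hX : IsClosed X)
    (f : X → Set Z)
    (hval : ∀ x, (f x).Nonempty ∧ IsCompact (f x))
    (hcont : VCont f)
    (ftil : StoneCech X → Set (StoneCech Z))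
    (hftilval : ∀ p, (ftil p).Nonempty ∧ IsCompact (ftil p))
    (hftilcont : VCont ftil)
    (hftilext : ∀ x : X, ftil (stoneCechUnit x) = stoneCechUnit '' f x)
    (ι : StoneCech X → StoneCech Z)
    (hιcont : Continuous ι)
    (hιext : ∀ x : X, ι (stoneCechUnit x) = stoneCechUnit (x : Z))
    (𝓕 : Finset (Set X))
    (hcover : ∀ x : X, ∃ F ∈ 𝓕, x ∈ F)
    (hbright : ∀ F ∈ 𝓕, IsClosed F ∧
      Disjoint (Subtype.val '' F) (closure (⋃ x ∈ F, f x))) :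
    (∀ p : StoneCech X, ∃ F ∈ 𝓕, p ∈ closure (stoneCechUnit '' F)) ∧
    ∀ F ∈ 𝓕, IsClosed (closure (stoneCechUnit '' F)) ∧
      Disjoint (ι '' closure (stoneCechUnit '' F))
        (closure (⋃ p ∈ closure (stoneCechUnit '' F), ftil p)) :=
  stmt11_general X hX f ftil hftilcont hftilext ι hιcont hιext 𝓕 hcover hbright
end

section
/- Let X be a discrete topological space and f : X → X a function. Then f is fixed-point free if and only if its continuous extension f̃ : βX → βX to the Stone–Čech compactification is fixed-point free. -/
/-!
The functional graph of a fixed-point free `f` is 3-colourable. On a finite set some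
vertex has at most one preimage, hence at most two neighbours, so a colouring can be built by
removing it; compactness (de Bruijn–Erdős) passes to all of `X`. If `c : X → Fin 3` separates
every `x` from `f x`, its extension `c̃` to `βX` satisfies `c̃ ∘ f̃ ≠ c̃` on the dense set `X`;
since `Fin 3` is discrete, `{p | c̃ (f̃ p) ≠ c̃ p}` is closed, so it is all of `βX`.
-/

open Finset

abbrev functionalGraph {X : Type*} (f : X → X) : SimpleGraph X :=
  SimpleGraph.fromRel fun x y => f x = y

theorem exists_fin_three_coloring_on_finset {X : Type*} [DecidableEq X] (f : X → X)
    (S : Finset X) : ∃ c : X → Fin 3, ∀ x ∈ S, f x ∈ S → f x ≠ x → c (f x) ≠ c x := by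
  induction S using Finset.strongInduction with
  | _ S ih =>
  rcases S.eq_empty_or_nonempty with rfl | hS
  · exact ⟨0, by simp⟩
  obtain ⟨x, hxS, hx⟩ :=
    exists_card_fiber_le_of_card_le_mul (s := S) (f := f) (n := 1) hS (by simp)
  obtain ⟨c, hc⟩ := ih (S.erase x) (erase_ssubset hxS)
  set T := insert (c (f x)) ({y ∈ S | f y = x}.image c)
  have hT : #T < #(univ : Finset (Fin 3)) :=
    calc #T ≤ #({y ∈ S | f y = x}.image c) + 1 := card_insert_le _ _
      _ ≤ 1 + 1 := by gcongr; exact card_image_le.trans hx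
      _ < _ := by simp
  obtain ⟨a, -, ha⟩ := exists_mem_notMem_of_card_lt_card hT
  refine ⟨Function.update c x a, fun z hz hfz hne => ?_⟩
  by_cases hzx : z = x
  · subst hzx
    rw [Function.update_self, Function.update_of_ne hne]
    exact fun h => ha (h ▸ mem_insert_self _ _)
  rw [Function.update_of_ne hzx]
  by_cases hfzx : f z = x
  · rw [hfzx, Function.update_self]
    exact fun h => ha (h ▸ mem_insert_of_mem (mem_image_of_mem c (mem_filter.mpr ⟨hz, hfzx⟩)))
  rw [Function.update_of_ne hfzx]
  exact hc z (mem_erase.mpr ⟨hzx, hz⟩) (mem_erase.mpr ⟨hfzx, hfz⟩) hne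

theorem functionalGraph_colorable_three {X : Type*} (f : X → X) :
    (functionalGraph f).Colorable 3 := by
  classical
  refine SimpleGraph.nonempty_hom_of_forall_finite_subgraph_hom fun G' hG' => Classical.choice ?_
  obtain ⟨c, hc⟩ := exists_fin_three_coloring_on_finset f hG'.toFinset
  refine ⟨⟨fun v => c v, ?_⟩⟩
  rintro ⟨u, hu⟩ ⟨v, hv⟩ huv
  obtain ⟨hne, huv | hvu⟩ := G'.adj_sub huv
  · subst huv
    exact (hc u (hG'.mem_toFinset.mpr hu) (hG'.mem_toFinset.mpr hv) (Ne.symm hne)).symm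
  · subst hvu
    exact hc v (hG'.mem_toFinset.mpr hv) (hG'.mem_toFinset.mpr hu) hne

theorem exists_fin_three_coloring {X : Type*} (f : X → X) :
    ∃ c : X → Fin 3, ∀ x, f x ≠ x → c (f x) ≠ c x := by
  obtain ⟨C⟩ := functionalGraph_colorable_three f
  exact ⟨C, fun x hx => (C.valid ⟨Ne.symm hx, Or.inl rfl⟩).symm⟩

theorem DenseRange.apply_ne_apply_of_discreteTopology {α β Y : Type*} [TopologicalSpace β]
    [TopologicalSpace Y] [DiscreteTopology Y] {e : α → β} (he : DenseRange e) {u v : β → Y}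
    (hu : Continuous u) (hv : Continuous v) (h : ∀ a, u (e a) ≠ v (e a)) (b : β) :
    u b ≠ v b :=
  he.induction_on (p := fun b => u b ≠ v b) b
    ((isOpen_discrete {q : Y × Y | q.1 = q.2}).preimage (hu.prodMk hv)).isClosed_compl h

theorem stmt15 {X : Type*} [TopologicalSpace X] [DiscreteTopology X]
    (f : X → X) (ftil : StoneCech X → StoneCech X)
    (hcont : Continuous ftil)
    (hext : ∀ x, ftil (stoneCechUnit x) = stoneCechUnit (f x)) :
    (∀ x, f x ≠ x) ↔ ∀ p, ftil p ≠ p := by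
  refine ⟨fun hf p hp => ?_, fun h x hx => h (stoneCechUnit x) (by rw [hext, hx])⟩
  obtain ⟨c, hc⟩ := exists_fin_three_coloring f
  have hc' : Continuous (stoneCechExtend (continuous_of_discreteTopology (f := c))) :=
    continuous_stoneCechExtend _
  refine denseRange_stoneCechUnit.apply_ne_apply_of_discreteTopology (hc'.comp hcont) hc'
    (fun x => ?_) p (congrArg _ hp)
  simpa [hext, stoneCechExtend_stoneCechUnit] using hc x (hf x)
end
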